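/- If Δ is a local super-derivation of the super Schrödinger algebra 𝒮 satisfying Δ(h+z) = 0, then there exist complex numbers α, β, γ, a₁, a₂, a₃, a₄, a₅, b₁, b₂, b₃, b₄, d, μ such that Δ(e) = 2α·e − γ·p, Δ(f) = −2β·f − γ·q (with the same coefficient γ), Δ(E) = 2a₁·e − a₂·h + a₃·p + a₄·E − a₅·F, Δ(F) = −2b₁·f + b₂·h − a₃·q − b₃·E − b₄·F (with the same coefficient a₃), and Δ(G) = −b₂·p + a₂·q + d·z + μ·G (with the same coefficients a₂ and b₂ appearing in Δ(E) and Δ(F)). -/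

import Mathlib

noncomputable section

/-- Underlying space of the N=1 super Schrödinger algebra: coordinates in the
ordered basis (e, f, h, p, q, z, E, F, G). -/
abbrev SS : Type := Fin 9 → ℂ

def eV : SS := Pi.single 0 1
def fV : SS := Pi.single 1 1
def hV : SS := Pi.single 2 1
def pV : SS := Pi.single 3 1
def qV : SS := Pi.single 4 1
def zV : SS := Pi.single 5 1
def EV : SS := Pi.single 6 1
def FV : SS := Pi.single 7 1
def GV : SS := Pi.single 8 1

/-- Brackets of basis elements (structure constants), encoding the table
[h,e]=2e, [h,f]=-2f, [e,f]=h, [h,p]=p, [h,q]=-q, [p,q]=z, [e,q]=p, [p,f]=-q,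
[h,E]=E, [h,F]=-F, [e,F]=-E, [f,E]=-F, [p,F]=G, [q,E]=G, [E,E]=2e, [F,F]=-2f,
[G,G]=z, [E,F]=-h, [E,G]=-p, [F,G]=q, extended by graded skew-symmetry. -/
def brkB (i j : Fin 9) : SS :=
  match i.val, j.val with
  | 0, 1 => hV
  | 0, 4 => pV
  | 0, 7 => -EV
  | 1, 0 => -hV
  | 1, 2 => (2:ℂ) • fV
  | 1, 3 => qV
  | 1, 6 => -FV
  | 2, 0 => (2:ℂ) • eV
  | 2, 1 => (-2:ℂ) • fV
  | 2, 3 => pV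
  | 2, 4 => -qV
  | 2, 6 => EV
  | 2, 7 => -FV
  | 3, 1 => -qV
  | 3, 2 => -pV
  | 3, 4 => zV
  | 3, 7 => GV
  | 4, 0 => -pV
  | 4, 2 => qV
  | 4, 3 => -zV
  | 4, 6 => GV
  | 6, 1 => FV
  | 6, 2 => -EV
  | 6, 4 => -GV
  | 6, 6 => (2:ℂ) • eV
  | 6, 7 => -hV
  | 6, 8 => -pV
  | 7, 0 => EV
  | 7, 2 => FV
  | 7, 3 => -GV
  | 7, 6 => -hV
  | 7, 7 => (-2:ℂ) • fV
  | 7, 8 => qV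
  | 8, 6 => -pV
  | 8, 7 => qV
  | 8, 8 => zV
  | _, _ => 0

/-- The bilinear bracket of the super Schrödinger algebra. -/
def brk (x y : SS) : SS :=
  ∑ i : Fin 9, ∑ j : Fin 9, (x i * y j) • brkB i j

/-- The even part 𝒮₀ = span_ℂ{e, f, h, p, q, z}. -/
def S0 : Submodule ℂ SS := Submodule.span ℂ {eV, fV, hV, pV, qV, zV}

/-- The odd part 𝒮₁ = span_ℂ{E, F, G}. -/
def S1 : Submodule ℂ SS := Submodule.span ℂ {EV, FV, GV}

/-- `D` is a super-derivation of degree 0̄. -/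
def IsSuperDer0 (D : SS → SS) : Prop :=
  IsLinearMap ℂ D ∧
  (∀ x ∈ S0, D x ∈ S0) ∧ (∀ x ∈ S1, D x ∈ S1) ∧
  (∀ x y : SS, (x ∈ S0 ∨ x ∈ S1) → (y ∈ S0 ∨ y ∈ S1) →
    D (brk x y) = brk (D x) y + brk x (D y))

/-- `D` is a super-derivation of degree 1̄. -/
def IsSuperDer1 (D : SS → SS) : Prop :=
  IsLinearMap ℂ D ∧
  (∀ x ∈ S0, D x ∈ S1) ∧ (∀ x ∈ S1, D x ∈ S0) ∧
  (∀ x y : SS, x ∈ S0 → (y ∈ S0 ∨ y ∈ S1) →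
    D (brk x y) = brk (D x) y + brk x (D y)) ∧
  (∀ x y : SS, x ∈ S1 → (y ∈ S0 ∨ y ∈ S1) →
    D (brk x y) = brk (D x) y - brk x (D y))

/-- `D` is a super-derivation: a sum of super-derivations of degrees 0̄ and 1̄. -/
def IsSuperDer (D : SS → SS) : Prop :=
  ∃ D0 D1 : SS → SS, IsSuperDer0 D0 ∧ IsSuperDer1 D1 ∧ ∀ x, D x = D0 x + D1 x

/-- `Δ` is a local super-derivation: a linear map such that for every `x` there is a
super-derivation `D` (depending on `x`) with `Δ x = D x`. -/
def IsLocalSuperDer (Δ : SS → SS) : Prop :=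
  IsLinearMap ℂ Δ ∧ ∀ x : SS, ∃ D : SS → SS, IsSuperDer D ∧ Δ x = D x

/-- The even linear map δ with δ(e)=δ(f)=δ(h)=δ(E)=δ(F)=0, δ(p)=p, δ(q)=q,
δ(z)=2z, δ(G)=G. -/
def deltaMap (x : SS) : SS :=
  x 3 • pV + x 4 • qV + (2 * x 5) • zV + x 8 • GV


lemma sum9 {M : Type*} [AddCommMonoid M] (g : Fin 9 → M) :
    ∑ i : Fin 9, g i = g 0 + g 1 + g 2 + g 3 + g 4 + g 5 + g 6 + g 7 + g 8 := by
  simp [Fin.sum_univ_castSucc, Fin.sum_univ_eight]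

lemma brk_apply (x y : SS) (k : Fin 9) :
    brk x y k = ∑ i : Fin 9, ∑ j : Fin 9, x i * y j * brkB i j k := by
  simp [brk, Finset.sum_apply, mul_assoc]

@[simp] lemma eV_c0 : eV (0 : Fin 9) = 1 := rfl
@[simp] lemma eV_c1 : eV (1 : Fin 9) = 0 := rfl
@[simp] lemma eV_c2 : eV (2 : Fin 9) = 0 := rfl
@[simp] lemma eV_c3 : eV (3 : Fin 9) = 0 := rfl
@[simp] lemma eV_c4 : eV (4 : Fin 9) = 0 := rfl
@[simp] lemma eV_c5 : eV (5 : Fin 9) = 0 := rfl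
@[simp] lemma eV_c6 : eV (6 : Fin 9) = 0 := rfl
@[simp] lemma eV_c7 : eV (7 : Fin 9) = 0 := rfl
@[simp] lemma eV_c8 : eV (8 : Fin 9) = 0 := rfl
@[simp] lemma fV_c0 : fV (0 : Fin 9) = 0 := rfl
@[simp] lemma fV_c1 : fV (1 : Fin 9) = 1 := rfl
@[simp] lemma fV_c2 : fV (2 : Fin 9) = 0 := rfl
@[simp] lemma fV_c3 : fV (3 : Fin 9) = 0 := rfl
@[simp] lemma fV_c4 : fV (4 : Fin 9) = 0 := rfl
@[simp] lemma fV_c5 : fV (5 : Fin 9) = 0 := rfl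
@[simp] lemma fV_c6 : fV (6 : Fin 9) = 0 := rfl
@[simp] lemma fV_c7 : fV (7 : Fin 9) = 0 := rfl
@[simp] lemma fV_c8 : fV (8 : Fin 9) = 0 := rfl
@[simp] lemma hV_c0 : hV (0 : Fin 9) = 0 := rfl
@[simp] lemma hV_c1 : hV (1 : Fin 9) = 0 := rfl
@[simp] lemma hV_c2 : hV (2 : Fin 9) = 1 := rfl
@[simp] lemma hV_c3 : hV (3 : Fin 9) = 0 := rfl
@[simp] lemma hV_c4 : hV (4 : Fin 9) = 0 := rfl
@[simp] lemma hV_c5 : hV (5 : Fin 9) = 0 := rfl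
@[simp] lemma hV_c6 : hV (6 : Fin 9) = 0 := rfl
@[simp] lemma hV_c7 : hV (7 : Fin 9) = 0 := rfl
@[simp] lemma hV_c8 : hV (8 : Fin 9) = 0 := rfl
@[simp] lemma pV_c0 : pV (0 : Fin 9) = 0 := rfl
@[simp] lemma pV_c1 : pV (1 : Fin 9) = 0 := rfl
@[simp] lemma pV_c2 : pV (2 : Fin 9) = 0 := rfl
@[simp] lemma pV_c3 : pV (3 : Fin 9) = 1 := rfl
@[simp] lemma pV_c4 : pV (4 : Fin 9) = 0 := rfl
@[simp] lemma pV_c5 : pV (5 : Fin 9) = 0 := rfl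
@[simp] lemma pV_c6 : pV (6 : Fin 9) = 0 := rfl
@[simp] lemma pV_c7 : pV (7 : Fin 9) = 0 := rfl
@[simp] lemma pV_c8 : pV (8 : Fin 9) = 0 := rfl
@[simp] lemma qV_c0 : qV (0 : Fin 9) = 0 := rfl
@[simp] lemma qV_c1 : qV (1 : Fin 9) = 0 := rfl
@[simp] lemma qV_c2 : qV (2 : Fin 9) = 0 := rfl
@[simp] lemma qV_c3 : qV (3 : Fin 9) = 0 := rfl
@[simp] lemma qV_c4 : qV (4 : Fin 9) = 1 := rfl
@[simp] lemma qV_c5 : qV (5 : Fin 9) = 0 := rfl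
@[simp] lemma qV_c6 : qV (6 : Fin 9) = 0 := rfl
@[simp] lemma qV_c7 : qV (7 : Fin 9) = 0 := rfl
@[simp] lemma qV_c8 : qV (8 : Fin 9) = 0 := rfl
@[simp] lemma zV_c0 : zV (0 : Fin 9) = 0 := rfl
@[simp] lemma zV_c1 : zV (1 : Fin 9) = 0 := rfl
@[simp] lemma zV_c2 : zV (2 : Fin 9) = 0 := rfl
@[simp] lemma zV_c3 : zV (3 : Fin 9) = 0 := rfl
@[simp] lemma zV_c4 : zV (4 : Fin 9) = 0 := rfl
@[simp] lemma zV_c5 : zV (5 : Fin 9) = 1 := rfl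
@[simp] lemma zV_c6 : zV (6 : Fin 9) = 0 := rfl
@[simp] lemma zV_c7 : zV (7 : Fin 9) = 0 := rfl
@[simp] lemma zV_c8 : zV (8 : Fin 9) = 0 := rfl
@[simp] lemma EV_c0 : EV (0 : Fin 9) = 0 := rfl
@[simp] lemma EV_c1 : EV (1 : Fin 9) = 0 := rfl
@[simp] lemma EV_c2 : EV (2 : Fin 9) = 0 := rfl
@[simp] lemma EV_c3 : EV (3 : Fin 9) = 0 := rfl
@[simp] lemma EV_c4 : EV (4 : Fin 9) = 0 := rfl
@[simp] lemma EV_c5 : EV (5 : Fin 9) = 0 := rfl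
@[simp] lemma EV_c6 : EV (6 : Fin 9) = 1 := rfl
@[simp] lemma EV_c7 : EV (7 : Fin 9) = 0 := rfl
@[simp] lemma EV_c8 : EV (8 : Fin 9) = 0 := rfl
@[simp] lemma FV_c0 : FV (0 : Fin 9) = 0 := rfl
@[simp] lemma FV_c1 : FV (1 : Fin 9) = 0 := rfl
@[simp] lemma FV_c2 : FV (2 : Fin 9) = 0 := rfl
@[simp] lemma FV_c3 : FV (3 : Fin 9) = 0 := rfl
@[simp] lemma FV_c4 : FV (4 : Fin 9) = 0 := rfl
@[simp] lemma FV_c5 : FV (5 : Fin 9) = 0 := rfl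
@[simp] lemma FV_c6 : FV (6 : Fin 9) = 0 := rfl
@[simp] lemma FV_c7 : FV (7 : Fin 9) = 1 := rfl
@[simp] lemma FV_c8 : FV (8 : Fin 9) = 0 := rfl
@[simp] lemma GV_c0 : GV (0 : Fin 9) = 0 := rfl
@[simp] lemma GV_c1 : GV (1 : Fin 9) = 0 := rfl
@[simp] lemma GV_c2 : GV (2 : Fin 9) = 0 := rfl
@[simp] lemma GV_c3 : GV (3 : Fin 9) = 0 := rfl
@[simp] lemma GV_c4 : GV (4 : Fin 9) = 0 := rfl
@[simp] lemma GV_c5 : GV (5 : Fin 9) = 0 := rfl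
@[simp] lemma GV_c6 : GV (6 : Fin 9) = 0 := rfl
@[simp] lemma GV_c7 : GV (7 : Fin 9) = 0 := rfl
@[simp] lemma GV_c8 : GV (8 : Fin 9) = 1 := rfl

set_option maxHeartbeats 1000000 in
lemma brk_c0 (x y : SS) : brk x y 0 = 2 * (x 2 * y 0) + 2 * (x 6 * y 6) := by
  rw [brk_apply, sum9]
  simp only [sum9]
  norm_num [brkB]
  try simp only [eV_c0, eV_c1, eV_c2, eV_c3, eV_c4, eV_c5, eV_c6, eV_c7, eV_c8, fV_c0, fV_c1, fV_c2, fV_c3, fV_c4, fV_c5, fV_c6, fV_c7, fV_c8, hV_c0, hV_c1, hV_c2, hV_c3, hV_c4, hV_c5, hV_c6, hV_c7, hV_c8, pV_c0, pV_c1, pV_c2, pV_c3, pV_c4, pV_c5, pV_c6, pV_c7, pV_c8, qV_c0, qV_c1, qV_c2, qV_c3, qV_c4, qV_c5, qV_c6, qV_c7, qV_c8, zV_c0, zV_c1, zV_c2, zV_c3, zV_c4, zV_c5, zV_c6, zV_c7, zV_c8, EV_c0, EV_c1, EV_c2, EV_c3, EV_c4, EV_c5, EV_c6, EV_c7, EV_c8,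 FV_c0, FV_c1, FV_c2, FV_c3, FV_c4, FV_c5, FV_c6, FV_c7, FV_c8, GV_c0, GV_c1, GV_c2, GV_c3, GV_c4, GV_c5, GV_c6, GV_c7, GV_c8, mul_zero, zero_mul, mul_one, one_mul, add_zero, zero_add, neg_zero, neg_neg]
  try ring

set_option maxHeartbeats 1000000 in
lemma brk_c1 (x y : SS) : brk x y 1 = 2 * (x 1 * y 2) - 2 * (x 2 * y 1) - 2 * (x 7 * y 7) := by
  rw [brk_apply, sum9]
  simp only [sum9]
  norm_num [brkB]
  try simp only [eV_c0, eV_c1, eV_c2, eV_c3, eV_c4, eV_c5, eV_c6, eV_c7, eV_c8, fV_c0, fV_c1, fV_c2, fV_c3, fV_c4, fV_c5, fV_c6, fV_c7, fV_c8, hV_c0, hV_c1, hV_c2, hV_c3, hV_c4, hV_c5, hV_c6, hV_c7, hV_c8, pV_c0, pV_c1, pV_c2, pV_c3, pV_c4, pV_c5, pV_c6, pV_c7, pV_c8, qV_c0, qV_c1, qV_c2, qV_c3, qV_c4, qV_c5, qV_c6, qV_c7, qV_c8, zV_c0, zV_c1, zV_c2, zV_c3, zV_c4, zV_c5, zV_c6,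 zV_c7, zV_c8, EV_c0, EV_c1, EV_c2, EV_c3, EV_c4, EV_c5, EV_c6, EV_c7, EV_c8, FV_c0, FV_c1, FV_c2, FV_c3, FV_c4, FV_c5, FV_c6, FV_c7, FV_c8, GV_c0, GV_c1, GV_c2, GV_c3, GV_c4, GV_c5, GV_c6, GV_c7, GV_c8, mul_zero, zero_mul, mul_one, one_mul, add_zero, zero_add, neg_zero, neg_neg]
  try ring

set_option maxHeartbeats 1000000 in
lemma brk_c2 (x y : SS) : brk x y 2 = x 0 * y 1 - x 1 * y 0 - x 6 * y 7 - x 7 * y 6 := by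
  rw [brk_apply, sum9]
  simp only [sum9]
  norm_num [brkB]
  try simp only [eV_c0, eV_c1, eV_c2, eV_c3, eV_c4, eV_c5, eV_c6, eV_c7, eV_c8, fV_c0, fV_c1, fV_c2, fV_c3, fV_c4, fV_c5, fV_c6, fV_c7, fV_c8, hV_c0, hV_c1, hV_c2, hV_c3, hV_c4, hV_c5, hV_c6, hV_c7, hV_c8, pV_c0, pV_c1, pV_c2, pV_c3, pV_c4, pV_c5, pV_c6, pV_c7, pV_c8, qV_c0, qV_c1, qV_c2, qV_c3, qV_c4, qV_c5, qV_c6, qV_c7, qV_c8, zV_c0, zV_c1, zV_c2, zV_c3, zV_c4, zV_c5, zV_c6, zV_c7, zV_c8, EV_c0, EV_c1, EV_c2, EV_c3, EV_c4, EV_c5, EV_c6, EV_c7, EV_c8, FV_c0, FV_c1, FV_c2, FV_c3, FV_c4, FV_c5, FV_c6, FV_c7, FV_c8, GV_c0, GV_c1, GV_c2, GV_c3, GV_c4, GV_c5, GV_c6, GV_c7, GV_c8, mul_zero, zero_mul, mul_one, one_mul, add_zero, zero_add, neg_zero, neg_neg]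
  try ring

set_option maxHeartbeats 1000000 in
lemma brk_c3 (x y : SS) : brk x y 3 = x 0 * y 4 + x 2 * y 3 - x 3 * y 2 - x 4 * y 0 - x 6 * y 8 - x 8 * y 6 := by
  rw [brk_apply, sum9]
  simp only [sum9]
  norm_num [brkB]
  try simp only [eV_c0, eV_c1, eV_c2, eV_c3, eV_c4, eV_c5, eV_c6, eV_c7, eV_c8, fV_c0, fV_c1, fV_c2, fV_c3, fV_c4, fV_c5, fV_c6, fV_c7, fV_c8, hV_c0, hV_c1, hV_c2, hV_c3, hV_c4, hV_c5, hV_c6, hV_c7, hV_c8, pV_c0, pV_c1, pV_c2, pV_c3, pV_c4, pV_c5, pV_c6, pV_c7, pV_c8, qV_c0, qV_c1, qV_c2, qV_c3, qV_c4, qV_c5, qV_c6, qV_c7, qV_c8, zV_c0, zV_c1, zV_c2, zV_c3, zV_c4, zV_c5, zV_c6, zV_c7, zV_c8, EV_c0, EV_c1, EV_c2, EV_c3, EV_c4, EV_c5, EV_c6, EV_c7, EV_c8, FV_c0, FV_c1, FV_c2, FV_c3, FV_c4, FV_c5, FV_c6, FV_c7, FV_c8, GV_c0, GV_c1, GV_c2,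 GV_c3, GV_c4, GV_c5, GV_c6, GV_c7, GV_c8, mul_zero, zero_mul, mul_one, one_mul, add_zero, zero_add, neg_zero, neg_neg]
  try ring

set_option maxHeartbeats 1000000 in
lemma brk_c4 (x y : SS) : brk x y 4 = x 1 * y 3 - x 2 * y 4 - x 3 * y 1 + x 4 * y 2 + x 7 * y 8 + x 8 * y 7 := by
  rw [brk_apply, sum9]
  simp only [sum9]
  norm_num [brkB]
  try simp only [eV_c0, eV_c1, eV_c2, eV_c3, eV_c4, eV_c5, eV_c6, eV_c7, eV_c8, fV_c0, fV_c1, fV_c2, fV_c3, fV_c4, fV_c5, fV_c6, fV_c7, fV_c8, hV_c0, hV_c1, hV_c2, hV_c3, hV_c4, hV_c5, hV_c6, hV_c7, hV_c8, pV_c0, pV_c1, pV_c2, pV_c3, pV_c4, pV_c5, pV_c6, pV_c7, pV_c8, qV_c0, qV_c1, qV_c2, qV_c3, qV_c4, qV_c5, qV_c6, qV_c7, qV_c8, zV_c0, zV_c1, zV_c2, zV_c3, zV_c4, zV_c5, zV_c6, zV_c7, zV_c8, EV_c0, EV_c1, EV_c2, EV_c3, EV_c4, EV_c5, EV_c6,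 EV_c7, EV_c8, FV_c0, FV_c1, FV_c2, FV_c3, FV_c4, FV_c5, FV_c6, FV_c7, FV_c8, GV_c0, GV_c1, GV_c2, GV_c3, GV_c4, GV_c5, GV_c6, GV_c7, GV_c8, mul_zero, zero_mul, mul_one, one_mul, add_zero, zero_add, neg_zero, neg_neg]
  try ring

set_option maxHeartbeats 1000000 in
lemma brk_c5 (x y : SS) : brk x y 5 = x 3 * y 4 - x 4 * y 3 + x 8 * y 8 := by
  rw [brk_apply, sum9]
  simp only [sum9]
  norm_num [brkB]
  try simp only [eV_c0, eV_c1, eV_c2, eV_c3, eV_c4, eV_c5, eV_c6, eV_c7, eV_c8, fV_c0, fV_c1, fV_c2, fV_c3, fV_c4, fV_c5, fV_c6, fV_c7, fV_c8, hV_c0, hV_c1, hV_c2, hV_c3, hV_c4, hV_c5, hV_c6, hV_c7, hV_c8, pV_c0, pV_c1, pV_c2, pV_c3, pV_c4, pV_c5, pV_c6, pV_c7, pV_c8, qV_c0, qV_c1, qV_c2, qV_c3, qV_c4, qV_c5, qV_c6, qV_c7, qV_c8, zV_c0, zV_c1, zV_c2, zV_c3, zV_c4, zV_c5, zV_c6,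 zV_c7, zV_c8, EV_c0, EV_c1, EV_c2, EV_c3, EV_c4, EV_c5, EV_c6, EV_c7, EV_c8, FV_c0, FV_c1, FV_c2, FV_c3, FV_c4, FV_c5, FV_c6, FV_c7, FV_c8, GV_c0, GV_c1, GV_c2, GV_c3, GV_c4, GV_c5, GV_c6, GV_c7, GV_c8, mul_zero, zero_mul, mul_one, one_mul, add_zero, zero_add, neg_zero, neg_neg]
  try ring

set_option maxHeartbeats 1000000 in
lemma brk_c6 (x y : SS) : brk x y 6 = -(x 0 * y 7) + x 2 * y 6 - x 6 * y 2 + x 7 * y 0 := by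
  rw [brk_apply, sum9]
  simp only [sum9]
  norm_num [brkB]
  try simp only [eV_c0, eV_c1, eV_c2, eV_c3, eV_c4, eV_c5, eV_c6, eV_c7, eV_c8, fV_c0, fV_c1, fV_c2, fV_c3, fV_c4, fV_c5, fV_c6, fV_c7, fV_c8, hV_c0, hV_c1, hV_c2, hV_c3, hV_c4, hV_c5, hV_c6, hV_c7, hV_c8, pV_c0, pV_c1, pV_c2, pV_c3, pV_c4, pV_c5, pV_c6, pV_c7, pV_c8, qV_c0, qV_c1, qV_c2, qV_c3, qV_c4, qV_c5, qV_c6, qV_c7, qV_c8, zV_c0, zV_c1, zV_c2, zV_c3, zV_c4, zV_c5, zV_c6, zV_c7, zV_c8, EV_c0, EV_c1, EV_c2, EV_c3, EV_c4, EV_c5, EV_c6, EV_c7, EV_c8, FV_c0, FV_c1, FV_c2, FV_c3, FV_c4, FV_c5, FV_c6, FV_c7, FV_c8, GV_c0, GV_c1, GV_c2, GV_c3, GV_c4, GV_c5, GV_c6, GV_c7, GV_c8, mul_zero, zero_mul, mul_one, one_mul, add_zero, zero_add, neg_zero, neg_neg]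
  try ring

set_option maxHeartbeats 1000000 in
lemma brk_c7 (x y : SS) : brk x y 7 = -(x 1 * y 6) - x 2 * y 7 + x 6 * y 1 + x 7 * y 2 := by
  rw [brk_apply, sum9]
  simp only [sum9]
  norm_num [brkB]
  try simp only [eV_c0, eV_c1, eV_c2, eV_c3, eV_c4, eV_c5, eV_c6, eV_c7, eV_c8, fV_c0, fV_c1, fV_c2, fV_c3, fV_c4, fV_c5, fV_c6, fV_c7, fV_c8, hV_c0, hV_c1, hV_c2, hV_c3, hV_c4, hV_c5, hV_c6, hV_c7, hV_c8, pV_c0, pV_c1, pV_c2, pV_c3, pV_c4, pV_c5, pV_c6, pV_c7, pV_c8, qV_c0, qV_c1, qV_c2, qV_c3, qV_c4, qV_c5, qV_c6, qV_c7, qV_c8, zV_c0, zV_c1, zV_c2, zV_c3, zV_c4, zV_c5, zV_c6, zV_c7, zV_c8, EV_c0, EV_c1, EV_c2, EV_c3, EV_c4, EV_c5, EV_c6, EV_c7, EV_c8, FV_c0, FV_c1, FV_c2, FV_c3, FV_c4, FV_c5, FV_c6, FV_c7, FV_c8, GV_c0, GV_c1, GV_c2, GV_c3, GV_c4, GV_c5,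 GV_c6, GV_c7, GV_c8, mul_zero, zero_mul, mul_one, one_mul, add_zero, zero_add, neg_zero, neg_neg]
  try ring

set_option maxHeartbeats 1000000 in
lemma brk_c8 (x y : SS) : brk x y 8 = x 3 * y 7 + x 4 * y 6 - x 6 * y 4 - x 7 * y 3 := by
  rw [brk_apply, sum9]
  simp only [sum9]
  norm_num [brkB]
  try simp only [eV_c0, eV_c1, eV_c2, eV_c3, eV_c4, eV_c5, eV_c6, eV_c7, eV_c8, fV_c0, fV_c1, fV_c2, fV_c3, fV_c4, fV_c5, fV_c6, fV_c7, fV_c8, hV_c0, hV_c1, hV_c2, hV_c3, hV_c4, hV_c5, hV_c6, hV_c7, hV_c8, pV_c0, pV_c1, pV_c2, pV_c3, pV_c4, pV_c5, pV_c6, pV_c7, pV_c8, qV_c0, qV_c1, qV_c2, qV_c3, qV_c4, qV_c5, qV_c6, qV_c7, qV_c8, zV_c0, zV_c1, zV_c2, zV_c3, zV_c4, zV_c5, zV_c6, zV_c7, zV_c8, EV_c0, EV_c1, EV_c2, EV_c3, EV_c4, EV_c5, EV_c6, EV_c7, EV_c8, FV_c0, FV_c1, FV_c2, FV_c3, FV_c4,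 FV_c5, FV_c6, FV_c7, FV_c8, GV_c0, GV_c1, GV_c2, GV_c3, GV_c4, GV_c5, GV_c6, GV_c7, GV_c8, mul_zero, zero_mul, mul_one, one_mul, add_zero, zero_add, neg_zero, neg_neg]
  try ring
lemma b01 : brk eV fV = hV := by
  funext k
  fin_cases k <;>
    simp [brk_c0, brk_c1, brk_c2, brk_c3, brk_c4, brk_c5, brk_c6, brk_c7, brk_c8]

lemma b20 : brk hV eV = (2:ℂ) • eV := by
  funext k
  fin_cases k <;>
    simp [brk_c0, brk_c1, brk_c2, brk_c3, brk_c4, brk_c5, brk_c6, brk_c7, brk_c8]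
lemma b02 : brk eV hV = 0 := by
  funext k
  fin_cases k <;>
    simp [brk_c0, brk_c1, brk_c2, brk_c3, brk_c4, brk_c5, brk_c6, brk_c7, brk_c8]

lemma S0_coords {v : SS} (hv : v ∈ S0) : v 6 = 0 ∧ v 7 = 0 ∧ v 8 = 0 := by
  simp only [S0] at hv
  induction hv using Submodule.span_induction with
  | mem x hx =>
      simp only [Set.mem_insert_iff, Set.mem_singleton_iff] at hx
      rcases hx with rfl | rfl | rfl | rfl | rfl | rfl <;> exact ⟨rfl, rfl, rfl⟩
  | zero => exact ⟨rfl, rfl, rfl⟩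
  | add x y hx hy ihx ihy =>
      exact ⟨by simp [ihx.1, ihy.1], by simp [ihx.2.1, ihy.2.1], by simp [ihx.2.2, ihy.2.2]⟩
  | smul a x hx ih => exact ⟨by simp [ih.1], by simp [ih.2.1], by simp [ih.2.2]⟩

lemma S1_coords {v : SS} (hv : v ∈ S1) :
    v 0 = 0 ∧ v 1 = 0 ∧ v 2 = 0 ∧ v 3 = 0 ∧ v 4 = 0 ∧ v 5 = 0 := by
  simp only [S1] at hv
  induction hv using Submodule.span_induction with
  | mem x hx =>
      simp only [Set.mem_insert_iff, Set.mem_singleton_iff] at hx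
      rcases hx with rfl | rfl | rfl <;> exact ⟨rfl, rfl, rfl, rfl, rfl, rfl⟩
  | zero => exact ⟨rfl, rfl, rfl, rfl, rfl, rfl⟩
  | add x y hx hy ihx ihy =>
      refine ⟨?_, ?_, ?_, ?_, ?_, ?_⟩ <;>
        simp [ihx.1, ihy.1, ihx.2.1, ihy.2.1, ihx.2.2.1, ihy.2.2.1, ihx.2.2.2.1, ihy.2.2.2.1,
          ihx.2.2.2.2.1, ihy.2.2.2.2.1, ihx.2.2.2.2.2, ihy.2.2.2.2.2]
  | smul a x hx ih =>
      refine ⟨?_, ?_, ?_, ?_, ?_, ?_⟩ <;>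
        simp [ih.1, ih.2.1, ih.2.2.1, ih.2.2.2.1, ih.2.2.2.2.1, ih.2.2.2.2.2]

lemma eV_mem : eV ∈ S0 := Submodule.subset_span (by simp)
lemma fV_mem : fV ∈ S0 := Submodule.subset_span (by simp)
lemma hV_mem : hV ∈ S0 := Submodule.subset_span (by simp)
lemma EV_mem : EV ∈ S1 := Submodule.subset_span (by simp)
lemma FV_mem : FV ∈ S1 := Submodule.subset_span (by simp)
lemma GV_mem : GV ∈ S1 := Submodule.subset_span (by simp)
lemma b21 : brk hV fV = (-2:ℂ) • fV := by
  funext k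
  fin_cases k <;>
    simp [brk_c0, brk_c1, brk_c2, brk_c3, brk_c4, brk_c5, brk_c6, brk_c7, brk_c8]
lemma b26 : brk hV EV = EV := by
  funext k
  fin_cases k <;>
    simp [brk_c0, brk_c1, brk_c2, brk_c3, brk_c4, brk_c5, brk_c6, brk_c7, brk_c8]
lemma b27 : brk hV FV = -FV := by
  funext k
  fin_cases k <;>
    simp [brk_c0, brk_c1, brk_c2, brk_c3, brk_c4, brk_c5, brk_c6, brk_c7, brk_c8]
lemma b28 : brk hV GV = 0 := by
  funext k
  fin_cases k <;>
    simp [brk_c0, brk_c1, brk_c2, brk_c3, brk_c4, brk_c5, brk_c6, brk_c7, brk_c8]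
lemma b67 : brk EV FV = -hV := by
  funext k
  fin_cases k <;>
    simp [brk_c0, brk_c1, brk_c2, brk_c3, brk_c4, brk_c5, brk_c6, brk_c7, brk_c8]

lemma D0_facts {D : SS → SS} (h : IsSuperDer0 D) :
    D eV = D eV 0 • eV ∧ D fV = D fV 1 • fV ∧ D EV = D EV 6 • EV ∧
    D FV = D FV 7 • FV ∧ D GV = D GV 8 • GV := by
  obtain ⟨hlin, hS0, hS1, hL⟩ := h
  obtain ⟨pA1, pA2, pA3⟩ := S0_coords (hS0 eV eV_mem)
  obtain ⟨pB1, pB2, pB3⟩ := S0_coords (hS0 fV fV_mem)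
  obtain ⟨pH1, pH2, pH3⟩ := S0_coords (hS0 hV hV_mem)
  obtain ⟨pX0, pX1, pX2, pX3, pX4, pX5⟩ := S1_coords (hS1 EV EV_mem)
  obtain ⟨pY0, pY1, pY2, pY3, pY4, pY5⟩ := S1_coords (hS1 FV FV_mem)
  obtain ⟨pZ0, pZ1, pZ2, pZ3, pZ4, pZ5⟩ := S1_coords (hS1 GV GV_mem)
  have L01 := hL eV fV (Or.inl eV_mem) (Or.inl fV_mem)
  rw [b01] at L01
  have L02 := hL eV hV (Or.inl eV_mem) (Or.inl hV_mem)
  rw [b02, hlin.map_zero] at L02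
  have L20 := hL hV eV (Or.inl hV_mem) (Or.inl eV_mem)
  rw [b20, hlin.map_smul] at L20
  have L21 := hL hV fV (Or.inl hV_mem) (Or.inl fV_mem)
  rw [b21, hlin.map_smul] at L21
  have L26 := hL hV EV (Or.inl hV_mem) (Or.inr EV_mem)
  rw [b26] at L26
  have L27 := hL hV FV (Or.inl hV_mem) (Or.inr FV_mem)
  rw [b27, hlin.map_neg] at L27
  have L28 := hL hV GV (Or.inl hV_mem) (Or.inr GV_mem)
  rw [b28, hlin.map_zero] at L28
  have L67 := hL EV FV (Or.inr EV_mem) (Or.inr FV_mem)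
  rw [b67, hlin.map_neg] at L67
  have h0 : D hV 0 = 0 := by
    have t := congrFun L01 0; simp [brk_c0] at t; linear_combination t
  have h1 : D hV 1 = -2 * D eV 2 := by
    have t := congrFun L01 1; simp [brk_c1] at t; linear_combination t
  have h3 : D hV 3 = D fV 4 := by
    have t := congrFun L01 3; simp [brk_c3] at t; linear_combination t
  have h4 : D hV 4 = -(D eV 3) := by
    have t := congrFun L01 4; simp [brk_c4] at t; linear_combination t
  have a1 : D eV 1 = 0 := by
    have t := congrFun L02 1; simp [brk_c1] at t; linear_combination t
  have hH1 : D hV 1 = 0 := by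
    have t := congrFun L02 2; simp [brk_c2] at t; linear_combination -t
  have a2 : D eV 2 = 0 := by linear_combination (h1 - hH1)/2
  have a3 : D eV 3 = 0 := by
    have t := congrFun L02 3; simp [brk_c3] at t; linear_combination (t + h4)/2
  have hH4 : D hV 4 = 0 := by linear_combination h4 - a3
  have a4 : D eV 4 = 0 := by
    have t := congrFun L02 4; simp [brk_c4] at t; linear_combination -t
  have a5 : D eV 5 = 0 := by
    have t := congrFun L20 5; simp [brk_c5] at t; linear_combination t
  have b0 : D fV 0 = 0 := by
    have t := congrFun L21 0; simp [brk_c0] at t; linear_combination -t/4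
  have b2 : D fV 2 = 0 := by
    have t := congrFun L21 2; simp [brk_c2] at t; linear_combination -(t + h0)/2
  have b3 : D fV 3 = 0 := by
    have t := congrFun L21 3; simp [brk_c3] at t; linear_combination -t/3
  have b5 : D fV 5 = 0 := by
    have t := congrFun L21 5; simp [brk_c5] at t; linear_combination t
  have x7 : D EV 7 = 0 := by
    have t := congrFun L26 7; simp [brk_c7] at t; linear_combination (t - hH1)/2
  have x8 : D EV 8 = 0 := by
    have t := congrFun L26 8; simp [brk_c8] at t; linear_combination t + hH4
  have y6 : D FV 6 = 0 := by
    have t := congrFun L27 6; simp [brk_c6] at t; linear_combination (h0 - t)/2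
  have y8 : D FV 8 = -(D hV 3) := by
    have t := congrFun L27 8; simp [brk_c8] at t; linear_combination -t
  have hH3 : D hV 3 = 0 := by
    have t := congrFun L67 3; simp [brk_c3] at t; linear_combination (t + y8)/2
  have b4 : D fV 4 = 0 := by linear_combination hH3 - h3
  have y8' : D FV 8 = 0 := by linear_combination y8 - hH3
  have z6 : D GV 6 = 0 := by
    have t := congrFun L28 6; simp [brk_c6] at t; linear_combination -t
  have z7 : D GV 7 = 0 := by
    have t := congrFun L28 7; simp [brk_c7] at t; linear_combination t
  refine ⟨?_, ?_, ?_, ?_, ?_⟩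
  · funext k; fin_cases k <;> simp [a1, a2, a3, a4, a5, pA1, pA2, pA3]
  · funext k; fin_cases k <;> simp [b0, b2, b3, b4, b5, pB1, pB2, pB3]
  · funext k; fin_cases k <;> simp [x7, x8, pX0, pX1, pX2, pX3, pX4, pX5]
  · funext k; fin_cases k <;> simp [y6, y8', pY0, pY1, pY2, pY3, pY4, pY5]
  · funext k; fin_cases k <;> simp [z6, z7, pZ0, pZ1, pZ2, pZ3, pZ4, pZ5]
lemma b06 : brk eV EV = 0 := by
  funext k
  fin_cases k <;>
    simp [brk_c0, brk_c1, brk_c2, brk_c3, brk_c4, brk_c5, brk_c6, brk_c7, brk_c8]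
lemma b07 : brk eV FV = -EV := by
  funext k
  fin_cases k <;>
    simp [brk_c0, brk_c1, brk_c2, brk_c3, brk_c4, brk_c5, brk_c6, brk_c7, brk_c8]
lemma b08 : brk eV GV = 0 := by
  funext k
  fin_cases k <;>
    simp [brk_c0, brk_c1, brk_c2, brk_c3, brk_c4, brk_c5, brk_c6, brk_c7, brk_c8]
lemma b12 : brk fV hV = (2:ℂ) • fV := by
  funext k
  fin_cases k <;>
    simp [brk_c0, brk_c1, brk_c2, brk_c3, brk_c4, brk_c5, brk_c6, brk_c7, brk_c8]
lemma b16 : brk fV EV = -FV := by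
  funext k
  fin_cases k <;>
    simp [brk_c0, brk_c1, brk_c2, brk_c3, brk_c4, brk_c5, brk_c6, brk_c7, brk_c8]
lemma b18 : brk fV GV = 0 := by
  funext k
  fin_cases k <;>
    simp [brk_c0, brk_c1, brk_c2, brk_c3, brk_c4, brk_c5, brk_c6, brk_c7, brk_c8]

lemma D1_facts {D : SS → SS} (h : IsSuperDer1 D) :
    D eV = 0 ∧ D fV = 0 ∧ D EV = D EV 3 • pV ∧ D FV = D FV 4 • qV ∧
    D GV = D GV 5 • zV ∧ D FV 4 = -(D EV 3) := by
  obtain ⟨hlin, hS01, hS10, hL0, hL1⟩ := h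
  obtain ⟨pA0, pA1, pA2, pA3, pA4, pA5⟩ := S1_coords (hS01 eV eV_mem)
  obtain ⟨pB0, pB1, pB2, pB3, pB4, pB5⟩ := S1_coords (hS01 fV fV_mem)
  obtain ⟨pH0, pH1, pH2, pH3, pH4, pH5⟩ := S1_coords (hS01 hV hV_mem)
  obtain ⟨pX6, pX7, pX8⟩ := S0_coords (hS10 EV EV_mem)
  obtain ⟨pY6, pY7, pY8⟩ := S0_coords (hS10 FV FV_mem)
  obtain ⟨pZ6, pZ7, pZ8⟩ := S0_coords (hS10 GV GV_mem)
  have L01 := hL0 eV fV eV_mem (Or.inl fV_mem)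
  rw [b01] at L01
  have L02 := hL0 eV hV eV_mem (Or.inl hV_mem)
  rw [b02, hlin.map_zero] at L02
  have L06 := hL0 eV EV eV_mem (Or.inr EV_mem)
  rw [b06, hlin.map_zero] at L06
  have L07 := hL0 eV FV eV_mem (Or.inr FV_mem)
  rw [b07, hlin.map_neg] at L07
  have L08 := hL0 eV GV eV_mem (Or.inr GV_mem)
  rw [b08, hlin.map_zero] at L08
  have L12 := hL0 fV hV fV_mem (Or.inl hV_mem)
  rw [b12, hlin.map_smul] at L12
  have L26 := hL0 hV EV hV_mem (Or.inr EV_mem)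
  rw [b26] at L26
  have L16 := hL0 fV EV fV_mem (Or.inr EV_mem)
  rw [b16, hlin.map_neg] at L16
  have L18 := hL0 fV GV fV_mem (Or.inr GV_mem)
  rw [b18, hlin.map_zero] at L18
  have h6 : D hV 6 = -(D fV 7) := by
    have t := congrFun L01 6; simp [brk_c6] at t; linear_combination t
  have h7 : D hV 7 = D eV 6 := by
    have t := congrFun L01 7; simp [brk_c7] at t; linear_combination t
  have a6 : D eV 6 = 0 := by
    have t := congrFun L02 6; simp [brk_c6] at t; linear_combination (t - h7)/2
  have hH7 : D hV 7 = 0 := by linear_combination h7 + a6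
  have a7 : D eV 7 = 0 := by
    have t := congrFun L02 7; simp [brk_c7] at t; linear_combination -t
  have x1 : D EV 1 = 0 := by
    have t := congrFun L06 2; simp [brk_c2] at t; linear_combination a7 - t
  have l063 := congrFun L06 3
  simp [brk_c3] at l063
  have x0 : D EV 0 = 0 := by
    have t := congrFun L07 0; simp [brk_c0] at t; linear_combination t
  have x2 : D EV 2 = -(D FV 1) := by
    have t := congrFun L07 2; simp [brk_c2] at t; linear_combination -t + a6
  have rel : D FV 4 = -(D EV 3) := by
    have t := congrFun L07 3; simp [brk_c3] at t; linear_combination -t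
  have a8 : D eV 8 = 0 := by
    have t := congrFun L07 4; simp [brk_c4] at t; linear_combination (l063 - t)/2
  have x4 : D EV 4 = 0 := by linear_combination -l063 + a8
  have x5 : D EV 5 = 0 := by
    have t := congrFun L07 5; simp [brk_c5] at t; linear_combination t
  have z1 : D GV 1 = 0 := by
    have t := congrFun L08 2; simp [brk_c2] at t; linear_combination -t
  have z4 : D GV 4 = 0 := by
    have t := congrFun L08 3; simp [brk_c3] at t; linear_combination a6 - t
  have b6 : D fV 6 = 0 := by
    have t := congrFun L12 6; simp [brk_c6] at t; linear_combination t/3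
  have b8 : D fV 8 = 0 := by
    have t := congrFun L12 8; simp [brk_c8] at t; linear_combination t
  have h6z : D hV 6 = 0 := by
    have t := congrFun L26 0; simp [brk_c0, pH2] at t; linear_combination (-t - x0)/2
  have b7 : D fV 7 = 0 := by linear_combination h6 - h6z
  have y0 : D FV 0 = 0 := by
    have t := congrFun L16 0; simp [brk_c0, pB2] at t; linear_combination -t - 2*b6
  have y1 : D FV 1 = 0 := by
    have t := congrFun L16 1; simp [brk_c1] at t; linear_combination t + 2*x2
  have x2' : D EV 2 = 0 := by linear_combination x2 - y1
  have y2 : D FV 2 = 0 := by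
    have t := congrFun L16 2; simp [brk_c2] at t; linear_combination -t + b7 + x0
  have y3 : D FV 3 = 0 := by
    have t := congrFun L16 3; simp [brk_c3] at t; linear_combination t + b8
  have y5 : D FV 5 = 0 := by
    have t := congrFun L16 5; simp [brk_c5] at t; linear_combination t
  have z2 : D GV 2 = 0 := by
    have t := congrFun L18 1; simp [brk_c1] at t; linear_combination t
  have z0 : D GV 0 = 0 := by
    have t := congrFun L18 2; simp [brk_c2] at t; linear_combination t
  have z3 : D GV 3 = 0 := by
    have t := congrFun L18 4; simp [brk_c4] at t; linear_combination -t - b7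
  refine ⟨?_, ?_, ?_, ?_, ?_, rel⟩
  · funext k; fin_cases k <;> simp [pA0, pA1, pA2, pA3, pA4, pA5, a6, a7, a8]
  · funext k; fin_cases k <;> simp [pB0, pB1, pB2, pB3, pB4, pB5, b6, b7, b8]
  · funext k; fin_cases k <;> simp [x0, x1, x2', x4, x5, pX6, pX7, pX8]
  · funext k; fin_cases k <;> simp [y0, y1, y2, y3, y5, pY6, pY7, pY8]
  · funext k; fin_cases k <;> simp [z0, z1, z2, z3, z4, pZ6, pZ7, pZ8]
lemma superDer_map_add {D : SS → SS} (hD : IsSuperDer D) (x y : SS) :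
    D (x + y) = D x + D y := by
  obtain ⟨D0, D1, h0, h1, hsum⟩ := hD
  rw [hsum, hsum, hsum, h0.1.map_add, h1.1.map_add]
  abel

lemma superDer_facts {D : SS → SS} (hD : IsSuperDer D) :
    D eV = D eV 0 • eV ∧ D fV = D fV 1 • fV ∧
    D EV = D EV 3 • pV + D EV 6 • EV ∧
    D FV = D FV 4 • qV + D FV 7 • FV ∧
    D GV = D GV 5 • zV + D GV 8 • GV ∧
    D FV 4 = -(D EV 3) := by
  obtain ⟨D0, D1, h0, h1, hsum⟩ := hD
  obtain ⟨e0, f0, E0, F0, G0⟩ := D0_facts h0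
  obtain ⟨e1, f1, E1, F1, G1, rel1⟩ := D1_facts h1
  have he : D eV = D0 eV 0 • eV := by conv_lhs => rw [hsum, e0, e1, add_zero]
  have he0 : D eV 0 = D0 eV 0 := by rw [he]; simp
  have hf : D fV = D0 fV 1 • fV := by conv_lhs => rw [hsum, f0, f1, add_zero]
  have hf1 : D fV 1 = D0 fV 1 := by rw [hf]; simp
  have hE : D EV = D1 EV 3 • pV + D0 EV 6 • EV := by
    conv_lhs => rw [hsum, E0, E1]
    abel
  have hE3 : D EV 3 = D1 EV 3 := by rw [hE]; simp
  have hE6 : D EV 6 = D0 EV 6 := by rw [hE]; simp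
  have hF : D FV = D1 FV 4 • qV + D0 FV 7 • FV := by
    conv_lhs => rw [hsum, F0, F1]
    abel
  have hF4 : D FV 4 = D1 FV 4 := by rw [hF]; simp
  have hF7 : D FV 7 = D0 FV 7 := by rw [hF]; simp
  have hG : D GV = D1 GV 5 • zV + D0 GV 8 • GV := by
    conv_lhs => rw [hsum, G0, G1]
    abel
  have hG5 : D GV 5 = D1 GV 5 := by rw [hG]; simp
  have hG8 : D GV 8 = D0 GV 8 := by rw [hG]; simp
  refine ⟨by rw [he]; simp, by rw [hf]; simp,
    by rw [hE]; simp, by rw [hF]; simp,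
    by rw [hG]; simp, by rw [hF4, hE3]; exact rel1⟩
/-- If `Δ` is a local super-derivation of 𝒮 with `Δ(h+z) = 0`, then `Δ(e)`, `Δ(f)`,
`Δ(E)`, `Δ(F)`, `Δ(G)` have the stated forms with the indicated shared coefficients. -/
theorem localDer_forms_EFG (Δ : SS → SS) (hΔ : IsLocalSuperDer Δ)
    (hz : Δ (hV + zV) = 0) :
    ∃ (α β γ a1 a2 a3 a4 a5 b1 b2 b3 b4 d μ : ℂ),
      Δ eV = (2 * α) • eV - γ • pV ∧
      Δ fV = (-(2 * β)) • fV - γ • qV ∧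
      Δ EV = (2 * a1) • eV - a2 • hV + a3 • pV + a4 • EV - a5 • FV ∧
      Δ FV = (-(2 * b1)) • fV + b2 • hV - a3 • qV - b3 • EV - b4 • FV ∧
      Δ GV = -(b2 • pV) + a2 • qV + d • zV + μ • GV := by
  obtain ⟨hlin, hloc⟩ := hΔ
  obtain ⟨De, hDe, he⟩ := hloc eV
  obtain ⟨Df, hDf, hf⟩ := hloc fV
  obtain ⟨DE, hDE, hE⟩ := hloc EV
  obtain ⟨DF, hDF, hF⟩ := hloc FV
  obtain ⟨DG, hDG, hG⟩ := hloc GV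
  obtain ⟨Ds, hDs, hs⟩ := hloc (EV + FV)
  have He : Δ eV = Δ eV 0 • eV := by rw [he]; exact (superDer_facts hDe).1
  have Hf : Δ fV = Δ fV 1 • fV := by rw [hf]; exact (superDer_facts hDf).2.1
  have HE : Δ EV = Δ EV 3 • pV + Δ EV 6 • EV := by
    rw [hE]; exact (superDer_facts hDE).2.2.1
  have HF : Δ FV = Δ FV 4 • qV + Δ FV 7 • FV := by
    rw [hF]; exact (superDer_facts hDF).2.2.2.1
  have HG : Δ GV = Δ GV 5 • zV + Δ GV 8 • GV := by
    rw [hG]; exact (superDer_facts hDG).2.2.2.2.1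
  obtain ⟨-, -, Es, Fs, -, rels⟩ := superDer_facts hDs
  have hadd : Δ EV + Δ FV = Ds EV + Ds FV := by
    rw [← hlin.map_add, hs, superDer_map_add hDs]
  have c3 := congrFun hadd 3
  have c4 := congrFun hadd 4
  simp only [Pi.add_apply] at c3 c4
  have zF3 : Δ FV 3 = 0 := by rw [HF]; simp
  have zE4 : Δ EV 4 = 0 := by rw [HE]; simp
  have zsF3 : Ds FV 3 = 0 := by rw [Fs]; simp
  have zsE4 : Ds EV 4 = 0 := by rw [Es]; simp
  have key : Δ FV 4 = -(Δ EV 3) := by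
    linear_combination c4 - zE4 + zsE4 + rels + c3 - zF3 + zsF3
  refine ⟨Δ eV 0 / 2, -(Δ fV 1)/2, 0, 0, 0, Δ EV 3, Δ EV 6, 0, 0, 0, 0, -(Δ FV 7),
    Δ GV 5, Δ GV 8, ?_, ?_, ?_, ?_, ?_⟩
  · rw [show (2 * (Δ eV 0 / 2) : ℂ) = Δ eV 0 from by ring, zero_smul, sub_zero]
    exact He
  · rw [show (-(2 * (-(Δ fV 1) / 2)) : ℂ) = Δ fV 1 from by ring, zero_smul, sub_zero]
    exact Hf
  · simp only [mul_zero, zero_smul, sub_zero, zero_add]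
    exact HE
  · calc Δ FV = Δ FV 4 • qV + Δ FV 7 • FV := HF
      _ = _ := by
        rw [key]
        simp only [mul_zero, neg_zero, zero_smul, zero_add, zero_sub, sub_zero, neg_smul,
          sub_neg_eq_add, neg_neg]
  · simp only [zero_smul, neg_zero, zero_add]
    exact HG
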